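/- arXiv:2603.16814 — 4 statements merged into one kernel-verified Lean document; each statement's English description precedes it below -/
import Mathlib

section
/- Let A, B be the 3×3 matrices over ℤ/4ℤ given by A = I + E₁₂ and B = I + E₂₃. Then the matrix A²B² has no square root in the group generated by A and B inside GL₃(ℤ/4ℤ). -/
abbrev GL3 := Matrix.GeneralLinearGroup (Fin 3) (ZMod 4)
abbrev M3 := Matrix (Fin 3) (Fin 3) (ZMod 4)

def UT (Y : GL3) : Prop :=
  (Y : M3) 1 0 = 0 ∧ (Y : M3) 2 0 = 0 ∧ (Y : M3) 2 1 = 0 ∧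
  (Y : M3) 0 0 = 1 ∧ (Y : M3) 1 1 = 1 ∧ (Y : M3) 2 2 = 1

/-- For A = I + E₁₂ and B = I + E₂₃ in GL₃(ℤ/4ℤ), the matrix
A²B² has no square root in the subgroup generated by A and B. -/
theorem stmt_1
    (A B : Matrix.GeneralLinearGroup (Fin 3) (ZMod 4))
    (hA : (A : Matrix (Fin 3) (Fin 3) (ZMod 4)) = 1 + Matrix.single 0 1 1)
    (hB : (B : Matrix (Fin 3) (Fin 3) (ZMod 4)) = 1 + Matrix.single 1 2 1) :
    ¬ ∃ X ∈ Subgroup.closure ({A, B} :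
        Set (Matrix.GeneralLinearGroup (Fin 3) (ZMod 4))),
      X ^ 2 = A ^ 2 * B ^ 2 := by
  rintro ⟨X, hX, hXsq⟩
  have key : UT X := by
    clear hXsq
    induction hX using Subgroup.closure_induction with
    | mem x hx =>
      rcases hx with rfl | rfl <;>
        simp [UT, hA, hB, Matrix.single, Matrix.one_apply, Matrix.add_apply]
    | one => simp [UT, Matrix.one_apply]
    | mul x y hx hy px py =>
      obtain ⟨x10, x20, x21, x00, x11, x22⟩ := px
      obtain ⟨y10, y20, y21, y00, y11, y22⟩ := py
      refine ⟨?_, ?_, ?_, ?_, ?_, ?_⟩ <;>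
        simp [UT, Units.val_mul, Matrix.mul_apply, Fin.sum_univ_three,
          x10, x20, x21, x00, x11, x22, y10, y20, y21, y00, y11, y22]
    | inv x hx px =>
      obtain ⟨x10, x20, x21, x00, x11, x22⟩ := px
      have hKM : ((x⁻¹ : GL3) : M3) * (x : M3) = 1 := by
        rw [← Units.val_mul, inv_mul_cancel, Units.val_one]
      have e : ∀ i j, ∑ k, ((x⁻¹ : GL3) : M3) i k * (x : M3) k j = (1 : M3) i j := by
        intro i j
        have := congrFun (congrFun hKM i) j
        rwa [Matrix.mul_apply] at this
      have e10 := e 1 0; have e20 := e 2 0; have e21 := e 2 1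
      have e00 := e 0 0; have e11 := e 1 1; have e22 := e 2 2
      simp [Fin.sum_univ_three, x10, x20, x21, x00, x11, x22, Matrix.one_apply] at e10 e20 e21 e00 e11 e22
      rw [e20, zero_mul, zero_add] at e21
      rw [e10, zero_mul, zero_add] at e11
      simp only [e20, e21, zero_mul, zero_add] at e22
      simp only [UT, Matrix.coe_units_inv]
      exact ⟨e10, e20, e21, e00, e11, by simpa using e22⟩
  obtain ⟨x10, x20, x21, x00, x11, x22⟩ := key
  have hsq : ((X : M3)) * (X : M3) = (A : M3) * (A : M3) * ((B : M3) * (B : M3)) := by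
    have := congrArg Units.val hXsq
    simpa [Units.val_mul, pow_two] using this
  rw [hA, hB] at hsq
  have e01 := congrFun (congrFun hsq 0 : _) 1
  have e12 := congrFun (congrFun hsq 1 : _) 2
  have e02 := congrFun (congrFun hsq 0 : _) 2
  simp [Matrix.mul_apply, Fin.sum_univ_three, Matrix.single, Matrix.one_apply,
    Matrix.add_apply, x10, x20, x21, x00, x11, x22] at e01 e12 e02
  set a := (X : M3) 0 1
  set b := (X : M3) 1 2
  set c := (X : M3) 0 2
  revert e01 e12 e02
  clear_value a b c
  revert a b c
  decide
end

section
/- Let F be a free group (abstract) and let a, b, c ∈ F satisfy a²b²c² = 1. Then the subgroup generated by a, b, c is cyclic. -/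
/-! Auxiliary: a mod-2 Heisenberg-type group used to analyze the relation a²b²c² = 1. -/

structure LyndonHeis (ι : Type*) where
  p : ι → ZMod 2
  q : ι × ι → ZMod 2

namespace LyndonHeis

variable {ι : Type*}

@[ext] lemma ext' {x y : LyndonHeis ι} (hp : x.p = y.p) (hq : x.q = y.q) : x = y := by
  cases x; cases y; simp_all

instance : Mul (LyndonHeis ι) :=
  ⟨fun x y => ⟨x.p + y.p, x.q + y.q + fun u => x.p u.1 * y.p u.2⟩⟩

instance : One (LyndonHeis ι) := ⟨⟨0, 0⟩⟩

instance : Inv (LyndonHeis ι) :=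
  ⟨fun x => ⟨x.p, x.q + fun u => x.p u.1 * x.p u.2⟩⟩

@[simp] lemma mul_p (x y : LyndonHeis ι) : (x * y).p = x.p + y.p := rfl
@[simp] lemma mul_q (x y : LyndonHeis ι) :
    (x * y).q = x.q + y.q + fun u => x.p u.1 * y.p u.2 := rfl
@[simp] lemma one_p : (1 : LyndonHeis ι).p = 0 := rfl
@[simp] lemma one_q : (1 : LyndonHeis ι).q = 0 := rfl
@[simp] lemma inv_p (x : LyndonHeis ι) : (x⁻¹).p = x.p := rfl
@[simp] lemma inv_q (x : LyndonHeis ι) :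
    (x⁻¹).q = x.q + fun u => x.p u.1 * x.p u.2 := rfl

private lemma zmod2_add_self : ∀ x : ZMod 2, x + x = 0 := by decide

instance : Group (LyndonHeis ι) :=
  Group.ofLeftAxioms
    (assoc := by
      intro x y z
      ext u <;> simp [Pi.add_apply] <;> ring)
    (one_mul := by intro x; ext u <;> simp)
    (inv_mul_cancel := by
      intro x
      have h2 : ∀ a b : ZMod 2, a + b + (a + b) = 0 := by decide
      ext u
      · simp [zmod2_add_self]
      · simp only [mul_q, inv_q, inv_p, one_q, Pi.add_apply]
        have := h2 (x.q u) (x.p u.1 * x.p u.2)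
        calc x.q u + (fun u : ι × ι => x.p u.1 * x.p u.2) u + x.q u
              + x.p u.1 * x.p u.2 = 0 := by simpa [add_assoc] using this)

end LyndonHeis

/-- A free group on a subsingleton type is cyclic. -/
lemma freeGroup_isCyclic_of_subsingleton {ι : Type*} [Subsingleton ι] :
    IsCyclic (FreeGroup ι) := by
  rcases isEmpty_or_nonempty ι with hι | hι
  · have : ∀ x : FreeGroup ι, x = 1 := by
      intro x
      refine FreeGroup.induction_on x rfl (fun s => (IsEmpty.false s).elim)
        (fun s _ => (IsEmpty.false s).elim) (fun x y hx hy => by rw [hx, hy, one_mul])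
    exact ⟨⟨1, fun x => ⟨0, by rw [this x]; rfl⟩⟩⟩
  · obtain ⟨s₀⟩ := hι
    refine ⟨⟨FreeGroup.of s₀, fun x => ?_⟩⟩
    have : ∃ n : ℤ, FreeGroup.of s₀ ^ n = x := by
      refine FreeGroup.induction_on x ⟨0, rfl⟩ (fun s => ⟨1, by
        rw [zpow_one, Subsingleton.elim s₀ s]⟩)
        (fun s ⟨n, hn⟩ => ⟨-n, by rw [zpow_neg, hn]⟩)
        (fun x y ⟨n, hn⟩ ⟨m, hm⟩ => ⟨n + m, by rw [zpow_add, hn, hm]⟩)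
    obtain ⟨n, hn⟩ := this
    exact ⟨n, hn⟩

/-- The key lemma: if a free group is generated by three elements `a b c` with
`a² b² c² = 1`, then it is cyclic. -/
lemma freeGroup_cyclic_of_sq_rel {ι : Type*} (a b c : FreeGroup ι)
    (h : a ^ 2 * b ^ 2 * c ^ 2 = 1)
    (hgen : Subgroup.closure ({a, b, c} : Set (FreeGroup ι)) = ⊤) :
    IsCyclic (FreeGroup ι) := by
  classical
  set e : ι → ι → ZMod 2 := fun s u => if u = s then 1 else 0 with he
  set φ : FreeGroup ι →* LyndonHeis ι :=
    FreeGroup.lift (fun s => ⟨e s, 0⟩) with hφ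
  set A := (φ a).p with hA
  set B := (φ b).p with hB
  set C := (φ c).p with hC
  have sq_eq : ∀ g : LyndonHeis ι,
      g ^ 2 = ⟨0, fun u => g.p u.1 * g.p u.2⟩ := by
    intro g
    rw [pow_two]
    ext u
    · simp [LyndonHeis.zmod2_add_self]
    · simp only [LyndonHeis.mul_q, Pi.add_apply]
      rw [LyndonHeis.zmod2_add_self, zero_add]
  have key : ∀ u : ι × ι, A u.1 * A u.2 + B u.1 * B u.2 + C u.1 * C u.2 = 0 := by
    intro u
    have h1 : φ a ^ 2 * φ b ^ 2 * φ c ^ 2 = 1 := by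
      rw [← map_pow, ← map_pow, ← map_pow, ← map_mul, ← map_mul, h, map_one]
    rw [sq_eq (φ a), sq_eq (φ b), sq_eq (φ c)] at h1
    have h2 := congrArg (fun g : LyndonHeis ι => g.q u) h1
    simpa [Pi.add_apply, ← hA, ← hB, ← hC] using h2
  have mul_self : ∀ x : ZMod 2, x * x = x := by decide
  have hCs : ∀ s, C s = A s + B s := by
    intro s
    have hk := key (s, s)
    simp only [mul_self] at hk
    revert hk
    generalize A s = x; generalize B s = y; generalize C s = z
    revert x y z; decide
  have hAB : ∀ s t, A s * B t = B s * A t := by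
    intro s t
    have hk := key (s, t)
    rw [hCs s, hCs t] at hk
    revert hk
    generalize A s = x; generalize A t = x'; generalize B s = y; generalize B t = y'
    revert x x' y y'; decide
  have hD : ∃ D : ι → ZMod 2, (∃ l, ∀ u, A u = l * D u) ∧ (∃ l, ∀ u, B u = l * D u) ∧
      (∃ l, ∀ u, C u = l * D u) := by
    by_cases hA0 : ∀ u, A u = 0
    · refine ⟨B, ⟨0, fun u => by rw [hA0, zero_mul]⟩, ⟨1, fun u => (one_mul _).symm⟩,
        ⟨1, fun u => by rw [hCs, hA0, zero_add, one_mul]⟩⟩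
    · push_neg at hA0
      obtain ⟨s₀, hs₀⟩ := hA0
      have hA1 : A s₀ = 1 := by revert hs₀; generalize A s₀ = x; revert x; decide
      refine ⟨A, ⟨1, fun u => (one_mul _).symm⟩, ⟨B s₀, fun u => ?_⟩,
        ⟨1 + B s₀, fun u => ?_⟩⟩
      · have h3 := hAB s₀ u
        rw [hA1, one_mul] at h3
        exact h3
      · have h3 := hAB s₀ u
        rw [hA1, one_mul] at h3
        rw [hCs, h3]; ring
  obtain ⟨D, ⟨la, hla⟩, ⟨lb, hlb⟩, ⟨lc, hlc⟩⟩ := hD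
  -- the subgroup of elements whose abelianized mod-2 image is a multiple of D
  set Sgp : Subgroup (FreeGroup ι) :=
    { carrier := {g | ∃ l, ∀ u, (φ g).p u = l * D u}
      mul_mem' := by
        rintro g₁ g₂ ⟨l₁, h₁⟩ ⟨l₂, h₂⟩
        refine ⟨l₁ + l₂, fun u => ?_⟩
        rw [map_mul]
        show (φ g₁).p u + (φ g₂).p u = _
        rw [h₁ u, h₂ u]; ring
      one_mem' := ⟨0, fun u => by rw [map_one]; show (0 : ZMod 2) = 0 * D u; rw [zero_mul]⟩
      inv_mem' := by
        rintro g ⟨l, hl⟩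
        refine ⟨l, fun u => ?_⟩
        rw [map_inv]
        show (φ g).p u = l * D u
        exact hl u } with hSgp
  have hall : ∀ g : FreeGroup ι, ∃ l, ∀ u, (φ g).p u = l * D u := by
    intro g
    have hle : Subgroup.closure ({a, b, c} : Set (FreeGroup ι)) ≤ Sgp := by
      rw [Subgroup.closure_le]
      rintro x (rfl | rfl | rfl)
      · exact ⟨la, hla⟩
      · exact ⟨lb, hlb⟩
      · exact ⟨lc, hlc⟩
    rw [hgen] at hle
    exact hle (Subgroup.mem_top g)
  have hgen_eq : ∀ s : ι, ∀ u, e s u = D u := by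
    intro s
    obtain ⟨l, hl⟩ := hall (FreeGroup.of s)
    have hofp : (φ (FreeGroup.of s)).p = e s := by
      rw [hφ, FreeGroup.lift_apply_of]
    rw [hofp] at hl
    have h1 : l * D s = 1 := by
      have := hl s
      rw [he] at this
      simpa using this.symm
    have hl1 : l = 1 := by
      have hgen0 : ∀ l d : ZMod 2, l * d = 1 → l = 1 := by decide
      exact hgen0 _ _ h1
    intro u
    rw [hl u, hl1, one_mul]
  haveI : Subsingleton ι := by
    constructor
    intro s₁ s₂
    by_contra hne
    have h1 : (1 : ZMod 2) = D s₁ := by simpa [he] using hgen_eq s₁ s₁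
    have h2 : (0 : ZMod 2) = D s₁ := by simpa [he, hne] using hgen_eq s₂ s₁
    exact one_ne_zero (h1.trans h2.symm)
  exact freeGroup_isCyclic_of_subsingleton

/-- Lyndon: In a free group, if a²b²c² = 1 then the subgroup
generated by a, b, c is cyclic. -/
theorem stmt_3 {α : Type*} (a b c : FreeGroup α)
    (h : a ^ 2 * b ^ 2 * c ^ 2 = 1) :
    IsCyclic (Subgroup.closure ({a, b, c} : Set (FreeGroup α))) := by
  set H := Subgroup.closure ({a, b, c} : Set (FreeGroup α)) with hH
  obtain ⟨ι, ⟨bas⟩⟩ := (inferInstance : IsFreeGroup H).nonempty_basis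
  set eH : H ≃* FreeGroup ι := bas.repr with heH
  have ha : a ∈ H := Subgroup.subset_closure (by simp)
  have hb : b ∈ H := Subgroup.subset_closure (by simp)
  have hc : c ∈ H := Subgroup.subset_closure (by simp)
  set a' : H := ⟨a, ha⟩ with ha'
  set b' : H := ⟨b, hb⟩ with hb'
  set c' : H := ⟨c, hc⟩ with hc'
  have hrel' : a' ^ 2 * b' ^ 2 * c' ^ 2 = 1 := by
    apply Subtype.ext
    push_cast
    exact h
  have hgen' : Subgroup.closure ({a', b', c'} : Set H) = ⊤ := by
    have h0 : Subgroup.closure (((↑) : H → FreeGroup α) ⁻¹' {a, b, c}) = ⊤ :=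
      Subgroup.closure_closure_coe_preimage
    refine le_antisymm le_top ?_
    rw [← h0]
    apply Subgroup.closure_mono
    rintro ⟨x, hx⟩ hmem
    simp only [Set.mem_preimage, Set.mem_insert_iff, Set.mem_singleton_iff] at hmem
    rcases hmem with rfl | rfl | rfl
    · exact Set.mem_insert _ _
    · exact Set.mem_insert_of_mem _ (Set.mem_insert _ _)
    · exact Set.mem_insert_of_mem _ (Set.mem_insert_of_mem _ rfl)
  have hrel2 : (eH a') ^ 2 * (eH b') ^ 2 * (eH c') ^ 2 = 1 := by
    rw [← map_pow, ← map_pow, ← map_pow, ← map_mul, ← map_mul, hrel', map_one]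
  have hgen2 : Subgroup.closure ({eH a', eH b', eH c'} : Set (FreeGroup ι)) = ⊤ := by
    have himg : ({eH a', eH b', eH c'} : Set (FreeGroup ι)) = eH '' {a', b', c'} := by
      rw [Set.image_insert_eq, Set.image_insert_eq, Set.image_singleton]
    have h3 : Subgroup.closure ((⇑eH.toMonoidHom) '' ({a', b', c'} : Set H)) = ⊤ := by
      rw [← MonoidHom.map_closure, hgen']
      exact Subgroup.map_top_of_surjective _ eH.surjective
    rw [himg]
    exact h3
  haveI := freeGroup_cyclic_of_sq_rel (eH a') (eH b') (eH c') hrel2 hgen2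
  exact isCyclic_of_surjective eH.symm eH.symm.surjective
end

section
/- Let H be a group with an element whose centralizer equals the cyclic subgroup it generates (a self-centralizing cyclic subgroup C = ⟨c⟩). In the amalgamated free product H ∗_C (C × ℤⁿ) with stable element a generating a ℤ-factor, the subgroup generated by H and aHa⁻¹ is isomorphic to the double H ∗_{c = c̃} H̃ amalgamated over C. -/
open Monoid

/-- The free product of two groups amalgamated along homomorphisms
`ι : C →* H` and `κ : C →* A`, defined as the quotient of the free product
`H ∗ A` identifying the two copies of `C`. -/
def Amalgam {H A C : Type*} [Group H] [Group A] [Group C]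
    (ι : C →* H) (κ : C →* A) : Type _ :=
  (Coprod H A) ⧸ Subgroup.normalClosure
    (Set.range fun x : C => Coprod.inl (ι x) * (Coprod.inr (κ x))⁻¹)

instance {H A C : Type*} [Group H] [Group A] [Group C]
    (ι : C →* H) (κ : C →* A) : Group (Amalgam ι κ) :=
  QuotientGroup.Quotient.group _

/-- The canonical map `H →* H ∗_C A`. -/
def Amalgam.inl {H A C : Type*} [Group H] [Group A] [Group C]
    (ι : C →* H) (κ : C →* A) : H →* Amalgam ι κ :=
  (QuotientGroup.mk' _).comp Coprod.inl

/-- The canonical map `A →* H ∗_C A`. -/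
def Amalgam.inr {H A C : Type*} [Group H] [Group A] [Group C]
    (ι : C →* H) (κ : C →* A) : A →* Amalgam ι κ :=
  (QuotientGroup.mk' _).comp Coprod.inr

namespace Stmt9Aux

universe u
variable {H A : Type u} {C K : Type*} [Group H] [Group A] [Group C] [Group K]

theorem amalgam_inl_eq_inr (ι : C →* H) (κ : C →* A) (x : C) :
    Amalgam.inl ι κ (ι x) = Amalgam.inr ι κ (κ x) := by
  have hmem : Coprod.inl (ι x) * (Coprod.inr (κ x))⁻¹ ∈
      Subgroup.normalClosure
        (Set.range fun x : C => Coprod.inl (ι x) * (Coprod.inr (κ x))⁻¹) :=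
    Subgroup.subset_normalClosure ⟨x, rfl⟩
  have h1 : (QuotientGroup.mk' _ : Coprod H A →* _)
      (Coprod.inl (ι x) * (Coprod.inr (κ x))⁻¹) = 1 :=
    (QuotientGroup.eq_one_iff _).2 hmem
  rw [map_mul, map_inv, mul_inv_eq_one] at h1
  exact h1

/-- Universal property of `Amalgam`. -/
def alift (ι : C →* H) (κ : C →* A) (f : H →* K) (g : A →* K)
    (hfg : f.comp ι = g.comp κ) : Amalgam ι κ →* K :=
  QuotientGroup.lift _ (Coprod.lift f g) (by
    intro x hx
    refine Subgroup.normalClosure_le_normal ?_ hx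
    rintro y ⟨z, rfl⟩
    have : f (ι z) = g (κ z) := DFunLike.congr_fun hfg z
    simp only [SetLike.mem_coe, MonoidHom.mem_ker, map_mul, map_inv,
      Coprod.lift_apply_inl, Coprod.lift_apply_inr, this, mul_inv_cancel])

@[simp] theorem alift_inl (ι : C →* H) (κ : C →* A) (f : H →* K) (g : A →* K)
    (hfg : f.comp ι = g.comp κ) (h : H) :
    alift ι κ f g hfg (Amalgam.inl ι κ h) = f h := by
  show QuotientGroup.lift _ (Coprod.lift f g) _ (QuotientGroup.mk (Coprod.inl h)) = f h
  rw [QuotientGroup.lift_mk, Coprod.lift_apply_inl]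

@[simp] theorem alift_inr (ι : C →* H) (κ : C →* A) (f : H →* K) (g : A →* K)
    (hfg : f.comp ι = g.comp κ) (h : A) :
    alift ι κ f g hfg (Amalgam.inr ι κ h) = g h := by
  show QuotientGroup.lift _ (Coprod.lift f g) _ (QuotientGroup.mk (Coprod.inr h)) = g h
  rw [QuotientGroup.lift_mk, Coprod.lift_apply_inr]

theorem ahom_ext {ι : C →* H} {κ : C →* A} {f g : Amalgam ι κ →* K}
    (h1 : f.comp (Amalgam.inl ι κ) = g.comp (Amalgam.inl ι κ))
    (h2 : f.comp (Amalgam.inr ι κ) = g.comp (Amalgam.inr ι κ)) : f = g := by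
  have hsurj : Function.Surjective (QuotientGroup.mk' (G := Coprod H A)
      (Subgroup.normalClosure
        (Set.range fun x : C => Coprod.inl (ι x) * (Coprod.inr (κ x))⁻¹))) :=
    QuotientGroup.mk'_surjective _
  refine (MonoidHom.cancel_right hsurj).mp ?_
  exact Coprod.hom_ext h1 h2

/-! ### The two-element family and the equivalence with `PushoutI` -/

abbrev Fam (H A : Type u) : Bool → Type u := fun b => cond b H A

instance famGroup : ∀ b, Group (Fam H A b) :=
  fun b => b.rec (inferInstanceAs (Group A)) (inferInstanceAs (Group H))

def fmap (ι : C →* H) (κ : C →* A) : ∀ b, C →* Fam H A b :=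
  fun b => b.rec κ ι

def toPush (ι : C →* H) (κ : C →* A) : Amalgam ι κ →* PushoutI (fmap ι κ) :=
  alift ι κ (PushoutI.of (φ := fmap ι κ) true) (PushoutI.of (φ := fmap ι κ) false)
    ((PushoutI.of_comp_eq_base (φ := fmap ι κ) true).trans
      (PushoutI.of_comp_eq_base (φ := fmap ι κ) false).symm)

@[simp] theorem toPush_inl (ι : C →* H) (κ : C →* A) (h : H) :
    toPush ι κ (Amalgam.inl ι κ h) = PushoutI.of (φ := fmap ι κ) true h :=
  alift_inl _ _ _ _ _ _

@[simp] theorem toPush_inr (ι : C →* H) (κ : C →* A) (h : A) :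
    toPush ι κ (Amalgam.inr ι κ h) = PushoutI.of (φ := fmap ι κ) false h :=
  alift_inr _ _ _ _ _ _

def fromPush (ι : C →* H) (κ : C →* A) : PushoutI (fmap ι κ) →* Amalgam ι κ :=
  PushoutI.lift (fun b => b.rec (Amalgam.inr ι κ) (Amalgam.inl ι κ))
    ((Amalgam.inl ι κ).comp ι)
    (by
      intro b
      cases b
      · exact MonoidHom.ext fun x => (amalgam_inl_eq_inr ι κ x).symm
      · rfl)

def amalgamEquivPush (ι : C →* H) (κ : C →* A) :
    Amalgam ι κ ≃* PushoutI (fmap ι κ) :=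
  MonoidHom.toMulEquiv (toPush ι κ) (fromPush ι κ)
    (by
      refine ahom_ext ?_ ?_ <;> ext h <;>
        simp only [MonoidHom.comp_apply, MonoidHom.id_apply, toPush_inl, toPush_inr,
          fromPush, PushoutI.lift_of] <;> rfl)
    (by
      refine PushoutI.hom_ext ?_ ?_
      · intro b
        cases b <;> ext g <;>
          simp only [MonoidHom.comp_apply, MonoidHom.id_apply, fromPush, PushoutI.lift_of]
        · exact toPush_inr ι κ g
        · exact toPush_inl ι κ g
      · ext x
        simp only [MonoidHom.comp_apply, MonoidHom.id_apply, fromPush, PushoutI.lift_base,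
          toPush_inl]
        exact PushoutI.of_apply_eq_base (fmap ι κ) true x)

variable (ι : C →* H) (κ : C →* A)

/-- `of true` with its type stated via `H`. -/
def ofH : H →* PushoutI (fmap ι κ) := PushoutI.of (φ := fmap ι κ) true

/-- `of false` with its type stated via `A`. -/
def ofA : A →* PushoutI (fmap ι κ) := PushoutI.of (φ := fmap ι κ) false

theorem ofH_comp : (ofH ι κ).comp ι = PushoutI.base (fmap ι κ) :=
  PushoutI.of_comp_eq_base (φ := fmap ι κ) true

theorem ofA_comp : (ofA ι κ).comp κ = PushoutI.base (fmap ι κ) :=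
  PushoutI.of_comp_eq_base (φ := fmap ι κ) false

theorem ofH_apply (x : C) : ofH ι κ (ι x) = PushoutI.base (fmap ι κ) x :=
  DFunLike.congr_fun (ofH_comp ι κ) x

theorem ofA_apply (x : C) : ofA ι κ (κ x) = PushoutI.base (fmap ι κ) x :=
  DFunLike.congr_fun (ofA_comp ι κ) x

variable (a₀ : A)

/-- The conjugating element `α = of false a₀`. -/
def alpha : PushoutI (fmap ι κ) := ofA ι κ a₀

/-- The embedding of the double `H ∗_C H` into `H ∗_C A`. -/
def Phi (hcomm : ∀ x : C, Commute (κ x) a₀) :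
    PushoutI (fmap ι ι) →* PushoutI (fmap ι κ) :=
  PushoutI.lift
    (fun b => b.rec
      ((MulAut.conj (alpha ι κ a₀)).toMonoidHom.comp (ofH ι κ))
      (ofH ι κ))
    (PushoutI.base (fmap ι κ))
    (by
      intro b
      cases b
      · ext x
        show alpha ι κ a₀ * ofH ι κ (ι x) * (alpha ι κ a₀)⁻¹ = PushoutI.base (fmap ι κ) x
        rw [ofH_apply]
        have h : PushoutI.base (fmap ι κ) x * alpha ι κ a₀ =
            alpha ι κ a₀ * PushoutI.base (fmap ι κ) x := by
          have h0 := congrArg (ofA ι κ) (hcomm x).eq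
          rw [map_mul, map_mul, ofA_apply] at h0
          exact h0
        rw [mul_inv_eq_iff_eq_mul]
        exact h.symm
      · exact ofH_comp ι κ)

variable (hcomm : ∀ x : C, Commute (κ x) a₀)

@[simp] theorem Phi_of_true (g : H) :
    Phi ι κ a₀ hcomm (ofH ι ι g) = ofH ι κ g :=
  PushoutI.lift_of _ _ _ _

@[simp] theorem Phi_of_false (g : H) :
    Phi ι κ a₀ hcomm (ofA ι ι g) =
      alpha ι κ a₀ * ofH ι κ g * (alpha ι κ a₀)⁻¹ :=
  PushoutI.lift_of _ _ _ _

@[simp] theorem Phi_base (x : C) :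
    Phi ι κ a₀ hcomm (PushoutI.base (fmap ι ι) x) = PushoutI.base (fmap ι κ) x :=
  PushoutI.lift_base _ _ _ _


open CoprodI


theorem expand (ha1 : (a₀ : A) ≠ 1) (ha₀ : a₀ ∉ κ.range)
    (w : CoprodI.Word (Fam H H)) :
    (∀ l ∈ w.toList, Sigma.snd l ∉ ((fmap ι ι l.1).range)) →
    ∃ w' : CoprodI.Word (Fam H A),
      (∀ l ∈ w'.toList, Sigma.snd l ∉ ((fmap ι κ l.1).range)) ∧
      PushoutI.ofCoprodI w'.prod =
        Phi ι κ a₀ hcomm (PushoutI.ofCoprodI w.prod) ∧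
      w'.fstIdx = w.fstIdx := by
  induction w using CoprodI.Word.consRecOn with
  | empty =>
    intro _
    exact ⟨.empty, by simp [CoprodI.Word.empty],
      by simp [CoprodI.Word.prod_empty], rfl⟩
  | cons i g w h1 h2 ih =>
    intro hred
    have hconsList : (CoprodI.Word.cons g w h1 h2).toList = ⟨i, g⟩ :: w.toList := rfl
    have hgred : g ∉ ((fmap ι ι i).range) :=
      hred ⟨i, g⟩ (by rw [hconsList]; exact List.mem_cons_self)
    obtain ⟨w', hred', hprod', hfst'⟩ :=
      ih (fun l hl => hred l (by rw [hconsList]; exact List.mem_cons_of_mem _ hl))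
    have hfstne : w'.fstIdx ≠ some i := by rw [hfst']; exact h1
    cases i with
    | true =>
      refine ⟨CoprodI.Word.cons (M := Fam H A) (i := true) (show H from g) w' hfstne h2, ?_, ?_, ?_⟩
      · intro l hl
        have : l = ⟨true, g⟩ ∨ l ∈ w'.toList := List.mem_cons.mp hl
        rcases this with rfl | hl'
        · exact hgred
        · exact hred' l hl'
      · rw [CoprodI.Word.prod_cons, CoprodI.Word.prod_cons, map_mul, map_mul]
        have h3 : (PushoutI.ofCoprodI (CoprodI.of (M := Fam H A) (i := true) g)) = ofH ι κ g := by
          rw [PushoutI.ofCoprodI_of]; rfl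
        have h4 : (PushoutI.ofCoprodI (CoprodI.of (M := Fam H H) (i := true) g)) = ofH ι ι g := by
          rw [PushoutI.ofCoprodI_of]; rfl
        rw [h3, h4, map_mul, Phi_of_true, hprod']
      · rw [CoprodI.Word.fstIdx_cons, CoprodI.Word.fstIdx_cons]
    | false =>
      have hainv : (a₀⁻¹ : A) ∉ κ.range := fun h => ha₀ (by simpa using inv_mem h)
      have ha1' : (a₀⁻¹ : A) ≠ 1 := inv_ne_one.mpr ha1
      set w1 := CoprodI.Word.cons (i := false) (M := Fam H A) a₀⁻¹ w' hfstne ha1' with hw1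
      have hw1fst : w1.fstIdx = some false := CoprodI.Word.fstIdx_cons _ _ _ _
      set w2 := CoprodI.Word.cons (i := true) (M := Fam H A) g w1
        (by rw [hw1fst]; simp) h2 with hw2
      have hw2fst : w2.fstIdx = some true := CoprodI.Word.fstIdx_cons _ _ _ _
      refine ⟨CoprodI.Word.cons (i := false) (M := Fam H A) a₀ w2
        (by rw [hw2fst]; simp) ha1, ?_, ?_, ?_⟩
      · intro l hl
        rcases List.mem_cons.mp hl with rfl | hl'
        · exact ha₀
        rcases List.mem_cons.mp hl' with rfl | hl''
        · exact hgred
        rcases List.mem_cons.mp hl'' with rfl | hl'''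
        · exact hainv
        · exact hred' l hl'''
      · rw [CoprodI.Word.prod_cons, map_mul, hw2, CoprodI.Word.prod_cons, map_mul,
          hw1, CoprodI.Word.prod_cons, map_mul, CoprodI.Word.prod_cons, map_mul]
        have h3 : (PushoutI.ofCoprodI (CoprodI.of (M := Fam H A) (i := false) a₀)) =
            alpha ι κ a₀ := by rw [PushoutI.ofCoprodI_of]; rfl
        have h3' : (PushoutI.ofCoprodI (CoprodI.of (M := Fam H A) (i := false) a₀⁻¹)) =
            (alpha ι κ a₀)⁻¹ := by
          rw [show (CoprodI.of (M := Fam H A) (i := false) a₀⁻¹) =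
            (CoprodI.of (M := Fam H A) (i := false) a₀)⁻¹ from map_inv _ _, map_inv, h3]
        have h4 : (PushoutI.ofCoprodI (CoprodI.of (M := Fam H A) (i := true) g)) = ofH ι κ g := by
          rw [PushoutI.ofCoprodI_of]; rfl
        have h5 : (PushoutI.ofCoprodI (CoprodI.of (M := Fam H H) (i := false) g)) = ofA ι ι g := by
          rw [PushoutI.ofCoprodI_of]; rfl
        rw [h3, h3', h4, h5, map_mul, Phi_of_false, hprod']
        simp only [mul_assoc]
      · rw [CoprodI.Word.fstIdx_cons, CoprodI.Word.fstIdx_cons]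

theorem Phi_injective (hι : Function.Injective ι) (hκ : Function.Injective κ)
    (ha₀ : a₀ ∉ κ.range) :
    Function.Injective (Phi ι κ a₀ hcomm) := by
  classical
  have ha1 : (a₀ : A) ≠ 1 := fun h => ha₀ (h ▸ one_mem _)
  have hinjD : ∀ b, Function.Injective (fmap ι ι b) := fun b => b.rec hι hι
  have hinjG : ∀ b, Function.Injective (fmap ι κ b) := fun b => b.rec hκ hι
  rw [injective_iff_map_eq_one]
  intro g hg
  obtain ⟨d⟩ := PushoutI.NormalWord.transversal_nonempty (fmap ι ι) hinjD
  set nw : PushoutI.NormalWord d := g • PushoutI.NormalWord.empty with hnwdef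
  have hprod : nw.prod = g := by
    rw [hnwdef, PushoutI.NormalWord.prod_smul, PushoutI.NormalWord.prod_empty, mul_one]
  have hprodeq : nw.prod = PushoutI.base (fmap ι ι) nw.head *
      PushoutI.ofCoprodI nw.toWord.prod := rfl
  have hred : ∀ l ∈ nw.toList, Sigma.snd l ∉ ((fmap ι ι l.1).range) := by
    intro l hl hrange
    have hset : l.snd ∈ d.set l.fst := nw.normalized l.1 l.2 hl
    have hne : l.snd ≠ 1 := nw.toWord.ne_one l hl
    have hpair := (d.compl l.1).1
      (a₁ := (⟨⟨l.2, hrange⟩, ⟨1, d.one_mem l.1⟩⟩ :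
        ((fmap ι ι l.1).range : Set (Fam H H l.1)) × d.set l.1))
      (a₂ := (⟨⟨1, Subgroup.one_mem _⟩, ⟨l.2, hset⟩⟩ :
        ((fmap ι ι l.1).range : Set (Fam H H l.1)) × d.set l.1))
      (by simp)
    have : l.snd = (1 : Fam H H l.1) := congrArg (fun p => (p.1 : Fam H H l.1)) hpair
    exact hne this
  obtain ⟨w', hred', hprod', hfst'⟩ := expand ι κ a₀ hcomm ha1 ha₀ nw.toWord hred
  have hG : PushoutI.base (fmap ι κ) nw.head * PushoutI.ofCoprodI w'.prod = 1 := by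
    have h0 : Phi ι κ a₀ hcomm nw.prod = 1 := by rw [hprod]; exact hg
    rw [hprodeq, map_mul, Phi_base, ← hprod'] at h0
    exact h0
  have hmem : PushoutI.ofCoprodI w'.prod ∈ (PushoutI.base (fmap ι κ)).range := by
    refine ⟨nw.head⁻¹, ?_⟩
    rw [map_inv]
    exact inv_eq_of_mul_eq_one_right hG
  have hw'empty : w' = CoprodI.Word.empty :=
    (show PushoutI.Reduced (fmap ι κ) w' from hred').eq_empty_of_mem_range hinjG hmem
  have hnil : nw.toWord.toList = [] := by
    have hfn : nw.toWord.fstIdx = none := by rw [← hfst', hw'empty]; rfl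
    rwa [CoprodI.Word.fstIdx, Option.map_eq_none_iff, List.head?_eq_none_iff] at hfn
  have hwprod : nw.toWord.prod = 1 := by
    have h0 : nw.toWord.prod =
        (List.map (fun l => CoprodI.of l.snd) nw.toWord.toList).prod := rfl
    rw [h0, hnil, List.map_nil, List.prod_nil]
  have hgbase : g = PushoutI.base (fmap ι ι) nw.head := by
    rw [← hprod, hprodeq, hwprod, map_one, mul_one]
  have hh : nw.head = 1 := by
    have h0 := hg
    rw [hgbase, Phi_base] at h0
    exact PushoutI.base_injective hinjG (by rw [h0, map_one])
  rw [hgbase, hh, map_one]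

theorem Phi_range :
    (Phi ι κ a₀ hcomm).range = Subgroup.closure
      (Set.range (ofH ι κ) ∪
       Set.range (fun h : H => alpha ι κ a₀ * ofH ι κ h * (alpha ι κ a₀)⁻¹)) := by
  have hall : ∀ x : PushoutI (fmap ι ι),
      x ∈ Subgroup.closure (Set.range (ofH ι ι) ∪ Set.range (ofA ι ι)) := by
    intro x
    induction x using PushoutI.induction_on with
    | of i g =>
      cases i
      · exact Subgroup.subset_closure (Or.inr ⟨g, rfl⟩)
      · exact Subgroup.subset_closure (Or.inl ⟨g, rfl⟩)
    | base x =>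
      have hb : PushoutI.base (fmap ι ι) x = ofH ι ι (ι x) := (ofH_apply ι ι x).symm
      rw [hb]
      exact Subgroup.subset_closure (Or.inl ⟨ι x, rfl⟩)
    | mul x y hx hy => exact mul_mem hx hy
  have htop : (⊤ : Subgroup (PushoutI (fmap ι ι))) =
      Subgroup.closure (Set.range (ofH ι ι) ∪ Set.range (ofA ι ι)) :=
    le_antisymm (fun x _ => hall x) le_top
  have h1 : (Phi ι κ a₀ hcomm) '' Set.range (ofH ι ι) = Set.range (ofH ι κ) := by
    rw [← Set.range_comp]
    exact congrArg Set.range (funext fun g => Phi_of_true ι κ a₀ hcomm g)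
  have h2 : (Phi ι κ a₀ hcomm) '' Set.range (ofA ι ι) =
      Set.range (fun h : H => alpha ι κ a₀ * ofH ι κ h * (alpha ι κ a₀)⁻¹) := by
    rw [← Set.range_comp]
    exact congrArg Set.range (funext fun g => Phi_of_false ι κ a₀ hcomm g)
  rw [MonoidHom.range_eq_map, htop, MonoidHom.map_closure, Set.image_union, h1, h2]


end Stmt9Aux

/-- Let `C = ⟨c⟩` be a self-centralizing cyclic subgroup of `H`.
In the centralizer extension `G = H ∗_C (C × ℤⁿ)`, with `a` the stable element
generating a ℤ-factor, the subgroup generated by `H` and `aHa⁻¹` is isomorphic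
to the Baumslag double `H ∗_C H̃`. -/
theorem stmt_9 {H : Type*} [Group H] (c : H)
    (hc : Subgroup.centralizer {c} = Subgroup.zpowers c)
    (n : ℕ) (hn : 0 < n) :
    -- the centralizer extension G = H ∗_C (C × ℤⁿ)
    let C : Subgroup H := Subgroup.zpowers c
    let κ : C →* C × Multiplicative (Fin n → ℤ) :=
      MonoidHom.inl C (Multiplicative (Fin n → ℤ))
    let G := Amalgam C.subtype κ
    -- the stable element a generating a ℤ-factor of ℤⁿ
    let a : G := Amalgam.inr C.subtype κ (1, Multiplicative.ofAdd (Pi.single ⟨0, hn⟩ 1))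
    -- the Baumslag double H ∗_{c = c̃} H̃
    let D := Amalgam C.subtype C.subtype
    Nonempty
      ((Subgroup.closure
          (Set.range (Amalgam.inl C.subtype κ) ∪
            Set.range fun h : H => a * Amalgam.inl C.subtype κ h * a⁻¹)) ≃* D) := by
  intro C κ G a D
  classical
  set ι : (C : Subgroup H) →* H := C.subtype with hι_def
  set a₀ : ↥C × Multiplicative (Fin n → ℤ) :=
    ((1 : ↥C), Multiplicative.ofAdd (Pi.single (M := fun _ : Fin n => ℤ) (⟨0, hn⟩ : Fin n) (1 : ℤ))) with ha₀_def
  have hι : Function.Injective ι := Subgroup.subtype_injective C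
  have hκ : Function.Injective κ := fun x y h => congrArg Prod.fst h
  have ha₀ : a₀ ∉ κ.range := by
    rintro ⟨x, hx⟩
    have h2 : (Multiplicative.ofAdd (Pi.single (M := fun _ : Fin n => ℤ) (⟨0, hn⟩ : Fin n) (1 : ℤ))) = 1 :=
      (congrArg Prod.snd hx).symm
    have h4 : Pi.single (M := fun _ : Fin n => ℤ) (⟨0, hn⟩ : Fin n) (1 : ℤ) = 0 :=
      Multiplicative.ofAdd.injective (h2.trans ofAdd_zero.symm)
    have h5 := congrFun h4 ⟨0, hn⟩
    rw [Pi.single_eq_same] at h5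
    exact one_ne_zero h5
  have hcomm : ∀ x : ↥C, Commute (κ x) a₀ := by
    intro x
    have hx : κ x = (x, 1) := rfl
    show κ x * a₀ = a₀ * κ x
    rw [hx, ha₀_def]
    refine Prod.ext ?_ ?_ <;> simp
  -- the embedding and the equivalences
  have hinj := Stmt9Aux.Phi_injective ι κ a₀ hcomm hι hκ ha₀
  set eG := Stmt9Aux.amalgamEquivPush ι κ with heG_def
  set eD := Stmt9Aux.amalgamEquivPush ι ι with heD_def
  set S : Subgroup G := Subgroup.closure
      (Set.range (Amalgam.inl C.subtype κ) ∪
        Set.range fun h : H => a * Amalgam.inl C.subtype κ h * a⁻¹) with hS_def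
  have hSeq : S.map eG.toMonoidHom = (Stmt9Aux.Phi ι κ a₀ hcomm).range := by
    rw [hS_def, MonoidHom.map_closure, Set.image_union, Stmt9Aux.Phi_range]
    have h1 : ⇑eG.toMonoidHom '' Set.range (Amalgam.inl C.subtype κ) =
        Set.range (Stmt9Aux.ofH ι κ) := by
      rw [← Set.range_comp]
      refine congrArg Set.range (funext fun h => ?_)
      exact Stmt9Aux.toPush_inl ι κ h
    have h2 : ⇑eG.toMonoidHom ''
        (Set.range fun h : H => a * Amalgam.inl C.subtype κ h * a⁻¹) =
        Set.range (fun h : H =>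
          Stmt9Aux.alpha ι κ a₀ * Stmt9Aux.ofH ι κ h * (Stmt9Aux.alpha ι κ a₀)⁻¹) := by
      rw [← Set.range_comp]
      refine congrArg Set.range (funext fun h => ?_)
      show eG (a * Amalgam.inl C.subtype κ h * a⁻¹) = _
      rw [map_mul, map_mul, map_inv]
      have hEa : eG a = Stmt9Aux.alpha ι κ a₀ := Stmt9Aux.toPush_inr ι κ a₀
      have hEh : eG (Amalgam.inl C.subtype κ h) = Stmt9Aux.ofH ι κ h :=
        Stmt9Aux.toPush_inl ι κ h
      rw [hEa, hEh]
    rw [h1, h2]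
  exact ⟨((eG.subgroupMap S).trans (MulEquiv.subgroupCongr hSeq)).trans
    ((MonoidHom.ofInjective hinj).symm.trans eD.symm)⟩
end

section
/- Let F be the free group on x₁, x₂ and consider the homomorphism f : F → GL₃(ℤ/4ℤ) sending x₁ ↦ I + E₁₂ and x₂ ↦ I + E₂₃. Then there is no w ∈ F with f(w)² = f(x₁²x₂²). -/
/-- Upper unitriangular predicate. -/
def Uni (M : Matrix (Fin 3) (Fin 3) (ZMod 4)) : Prop :=
  M 0 0 = 1 ∧ M 1 1 = 1 ∧ M 2 2 = 1 ∧ M 1 0 = 0 ∧ M 2 0 = 0 ∧ M 2 1 = 0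

lemma uni_one : Uni 1 := by
  simp [Uni, Matrix.one_apply]

lemma uni_mul {M N : Matrix (Fin 3) (Fin 3) (ZMod 4)} (hM : Uni M) (hN : Uni N) :
    Uni (M * N) := by
  obtain ⟨a1, a2, a3, a4, a5, a6⟩ := hM
  obtain ⟨b1, b2, b3, b4, b5, b6⟩ := hN
  simp [Uni, Matrix.mul_apply, Fin.sum_univ_three, a1, a2, a3, a4, a5, a6,
    b1, b2, b3, b4, b5, b6]

lemma uni_inv {M N : Matrix (Fin 3) (Fin 3) (ZMod 4)} (hM : Uni M) (h : M * N = 1) :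
    Uni N := by
  obtain ⟨a1, a2, a3, a4, a5, a6⟩ := hM
  have e : ∀ i j, (M * N) i j = (1 : Matrix (Fin 3) (Fin 3) (ZMod 4)) i j := by
    intro i j; rw [h]
  simp only [Matrix.mul_apply, Fin.sum_univ_three, Matrix.one_apply] at e
  have h20 := e 2 0
  have h21 := e 2 1
  have h22 := e 2 2
  simp [a3, a5, a6] at h20 h21 h22
  have h10 := e 1 0
  have h11 := e 1 1
  simp [a2, a4, h20, h21] at h10 h11
  have h00 := e 0 0
  simp [a1, h10, h20] at h00
  exact ⟨h00, h11, h22, h10, h20, h21⟩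

/-- Let f : F(x₁,x₂) → GL₃(ℤ/4ℤ) send x₁ ↦ I + E₁₂ and
x₂ ↦ I + E₂₃. Then no w in the free group satisfies f(w)² = f(x₁²x₂²). -/
theorem stmt_12
    (A B : Matrix.GeneralLinearGroup (Fin 3) (ZMod 4))
    (hA : (A : Matrix (Fin 3) (Fin 3) (ZMod 4)) = 1 + Matrix.single 0 1 1)
    (hB : (B : Matrix (Fin 3) (Fin 3) (ZMod 4)) = 1 + Matrix.single 1 2 1)
    (f : FreeGroup (Fin 2) →* Matrix.GeneralLinearGroup (Fin 3) (ZMod 4))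
    (hf : f = FreeGroup.lift ![A, B]) :
    ¬ ∃ w : FreeGroup (Fin 2),
      (f w) ^ 2 = f ((FreeGroup.of 0) ^ 2 * (FreeGroup.of 1) ^ 2) := by
  subst hf
  rintro ⟨w, hw⟩
  -- every element of the image is unitriangular
  have key : ∀ v : FreeGroup (Fin 2), Uni (((FreeGroup.lift ![A, B]) v : Matrix (Fin 3) (Fin 3) (ZMod 4))) := by
    intro v
    induction v using FreeGroup.induction_on with
    | C1 => simpa using uni_one
    | of x =>
      have hx : (FreeGroup.lift ![A, B]) (FreeGroup.of x) = ![A, B] x := FreeGroup.lift_apply_of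
      rw [hx]
      fin_cases x
      · simp [hA, Uni, Matrix.single, Matrix.one_apply]
      · simp [hB, Uni, Matrix.single, Matrix.one_apply]
    | inv_of x h =>
      rw [map_inv]
      exact uni_inv h (Units.mul_inv _)
    | mul u v hu hv =>
      rw [map_mul]
      exact_mod_cast uni_mul hu hv
  have hU := key w
  set M : Matrix (Fin 3) (Fin 3) (ZMod 4) := ((FreeGroup.lift ![A, B]) w : Matrix (Fin 3) (Fin 3) (ZMod 4)) with hM
  -- matrix-level equation
  have hmat : M * M = (A : Matrix (Fin 3) (Fin 3) (ZMod 4)) * A *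
      ((B : Matrix (Fin 3) (Fin 3) (ZMod 4)) * B) := by
    have h := congrArg (Units.val) hw
    simp only [map_mul, map_pow, FreeGroup.lift_apply_of, Matrix.cons_val_zero,
      Matrix.cons_val_one, Matrix.head_cons, Units.val_mul,
      Units.val_pow_eq_pow_val, pow_two] at h
    rw [hM]
    rw [h]
  obtain ⟨a1, a2, a3, a4, a5, a6⟩ := hU
  have e01 := congrFun (congrFun hmat 0) 1
  have e12 := congrFun (congrFun hmat 1) 2
  have e02 := congrFun (congrFun hmat 0) 2
  simp [Matrix.mul_apply, Fin.sum_univ_three, hA, hB, Matrix.single,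
    Matrix.one_apply, a1, a2, a3, a4, a5, a6] at e01 e12 e02
  -- e01 : 2 * M 0 1 = 2, e12 : 2 * M 1 2 = 2, e02 : 2 * M 0 2 + M 0 1 * M 1 2 = 0
  revert e01 e12 e02
  generalize M 0 1 = a
  generalize M 1 2 = b
  generalize M 0 2 = c
  revert a b c
  decide
end
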